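/- arXiv:1708.01934 — 2 statements merged into one kernel-verified Lean document; each statement's English description precedes it below -/
import Mathlib

section
/- Let X and Y be compact metrizable abelian topological groups with Haar probability measures μ_X and μ_Y, and let a ∈ X, b ∈ Y be elements such that the rotations T : x ↦ x + a and S : y ↦ y + b are ergodic (equivalently, {na : n ∈ ℤ} is dense in X and {nb : n ∈ ℤ} is dense in Y). Let H be the closure in X × Y of the subgroup {(na, nb) : n ∈ ℤ}. Then every ergodic joining λ of the ℤ systems (X, T, μ_X) and (Y, S, μ_Y) is the Haar measure of a coset of H: there exists (x₀, y₀) ∈ X × Y such that λ is the pushforward of the Haar probability measure of H under the map h ↦ (x₀, y₀) + h. -/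
open MeasureTheory Filter Topology

section ZDefs

variable {X Y : Type*} [MeasurableSpace X] [MeasurableSpace Y]

/-- A joining of two `ℤ` systems: a probability measure on the product, invariant under the
diagonal transformation, whose marginals are the two given measures. -/
def IsJoiningZ (T : X → X) (S : Y → Y) (μX : Measure X) (μY : Measure Y)
    (ν : Measure (X × Y)) : Prop :=
  IsProbabilityMeasure ν ∧ MeasurePreserving (Prod.map T S) ν ν ∧
    ν.map Prod.fst = μX ∧ ν.map Prod.snd = μY

/-- `f ∈ L²(X, μ)` is almost periodic if the orbit `{f ∘ Tⁿ : n ∈ ℤ}` has compact closure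
in the norm topology of `L²(X, μ)`. -/
def AlmostPeriodicZ (T : X ≃ X) (μ : Measure X) (f : Lp ℂ 2 μ) : Prop :=
  IsCompact (closure {h : Lp ℂ 2 μ | ∃ n : ℤ, (h : X → ℂ) =ᵐ[μ] fun x => f ((T ^ n) x)})

/-- The joining `ν` projects to the product measure on the product of the Kronecker factors. -/
def ProjectsToKroneckerProductZ (T : X ≃ X) (S : Y ≃ Y) (μX : Measure X) (μY : Measure Y)
    (ν : Measure (X × Y)) : Prop :=
  ∀ (f : Lp ℂ 2 μX) (h : Lp ℂ 2 μY), AlmostPeriodicZ T μX f → AlmostPeriodicZ S μY h →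
    ∫ p, f p.1 * h p.2 ∂ν = (∫ x, f x ∂μX) * (∫ y, h y ∂μY)

/-- Two `ℤ` systems are Kronecker disjoint if every joining projects to the product measure on
the product of the Kronecker factors. -/
def KroneckerDisjointZ (T : X ≃ X) (S : Y ≃ Y) (μX : Measure X) (μY : Measure Y) : Prop :=
  ∀ ν : Measure (X × Y), IsJoiningZ (⇑T) (⇑S) μX μY ν →
    ProjectsToKroneckerProductZ T S μX μY ν

/-- Ergodicity of a `ℤ` system: every invariant Borel set is null or conull. -/
def ErgodicZ (T : X → X) (μ : Measure X) : Prop :=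
  ∀ A : Set X, MeasurableSet A → T ⁻¹' A = A → μ A = 0 ∨ μ A = 1

/-- The discrete spectrum of a `ℤ` system: the set of eigenvalues of the Koopman operator. -/
def EigSet (T : X → X) (μ : Measure X) : Set ℂ :=
  {ζ : ℂ | ∃ f : Lp ℂ 2 μ, f ≠ 0 ∧ (fun x => (f : X → ℂ) (T x)) =ᵐ[μ] fun x => ζ * f x}

end ZDefs

/-- A function `w : ℕ → ℂ` is strongly `q`-multiplicative if `w 0 = 1` and `w n` is the product
of the values of `w` at the base-`q` digits of `n`. -/
def StronglyQMultiplicative (q : ℕ) (w : ℕ → ℂ) : Prop :=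
  w 0 = 1 ∧ ∀ n : ℕ, w n = ((Nat.digits q n).map w).prod

/-!
Translation by `(a, b)` preserves `ν`, and the translations preserving a finite measure form a
closed subgroup, so `ν` is invariant under every translation by the closure `H` of
`ℤ • (a, b)`. The projection `X × Y → (X × Y) ⧸ H` is invariant under the rotation, hence
a.e. constant by ergodicity: `ν` is carried by one coset `p₀ + H`. Translating `ν` back to `H`
and restricting it to `H` gives an `H`-invariant probability measure on `H`, i.e. its Haar
measure, whose image under `h ↦ p₀ + h` is `ν`.
-/

open scoped BoundedContinuousFunction

theorem PreErgodic.of_measure_eq_zero_or_one {α : Type*} [MeasurableSpace α] {f : α → α}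
    {μ : Measure α} [IsProbabilityMeasure μ]
    (h : ∀ s, MeasurableSet s → f ⁻¹' s = s → μ s = 0 ∨ μ s = 1) : PreErgodic f μ where
  aeconst_set s hs hfs := by
    rw [eventuallyConst_set']
    refine (h s hs hfs).imp ae_eq_empty.mpr fun hs1 => ?_
    rwa [ae_eq_univ, prob_compl_eq_zero_iff hs]

theorem PreErgodic.exists_ae_neg_add_mem {G : Type*} [AddCommGroup G] [TopologicalSpace G]
    [IsTopologicalAddGroup G] [SecondCountableTopology G] [MeasurableSpace G] [BorelSpace G]
    {ν : Measure G} (H : AddSubgroup G) [IsClosed (H : Set G)] {g : G} (hg : g ∈ H)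
    (hν : PreErgodic (g + ·) ν) : ∃ p : G, ∀ᵐ x ∂ν, -p + x ∈ H := by
  -- The projection to `G ⧸ H` is invariant under `g + ·`, hence a.e. constant.
  have hinv : ((↑) : G → G ⧸ H) ∘ (g + ·) = (↑) := by
    funext x
    simpa [QuotientAddGroup.eq] using hg
  -- `G ⧸ H` carries the quotient σ-algebra, which contains the Borel sets.
  have : OpensMeasurableSpace (G ⧸ H) :=
    ⟨MeasurableSpace.generateFrom_le fun s hs => (hs.preimage continuous_quot_mk).measurableSet⟩
  have hmeas : Measurable ((↑) : G → G ⧸ H) := measurable_quot_mk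
  obtain ⟨c, hc⟩ := hν.ae_eq_const_of_ae_eq_comp hmeas hinv
  obtain ⟨p, rfl⟩ := QuotientAddGroup.mk_surjective c
  exact ⟨p, hc.mono fun x hx => QuotientAddGroup.eq.mp hx.symm⟩

namespace MeasureTheory.Measure

section Stabilizer

variable {G : Type*} [AddGroup G] [MeasurableSpace G] [MeasurableAdd G]

def addStabilizer (ν : Measure G) : AddSubgroup G where
  carrier := {g | ν.map (g + ·) = ν}
  zero_mem' := by simp only [Set.mem_ofPred_eq, zero_add, map_id']
  add_mem' {u v} (hu : ν.map (u + ·) = ν) (hv : ν.map (v + ·) = ν) :=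
    calc ν.map (u + v + ·) = (ν.map (v + ·)).map (u + ·) := by
          rw [map_map (measurable_const_add u) (measurable_const_add v)]
          simp only [Function.comp_def, add_assoc]
      _ = ν := by rw [hv, hu]
  neg_mem' {u} (hu : ν.map (u + ·) = ν) :=
    calc ν.map (-u + ·) = (ν.map (u + ·)).map (-u + ·) := by rw [hu]
      _ = ν := by
          rw [map_map (measurable_const_add _) (measurable_const_add u)]
          simp only [Function.comp_def, neg_add_cancel_left, map_id']

variable {ν : Measure G} {g : G}

theorem mem_addStabilizer : g ∈ ν.addStabilizer ↔ ν.map (g + ·) = ν := Iff.rfl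

variable [TopologicalSpace G] [IsTopologicalAddGroup G] [BorelSpace G]
  [TopologicalSpace.PseudoMetrizableSpace G]

theorem isClosed_addStabilizer (ν : Measure G) [IsFiniteMeasure ν] :
    IsClosed (ν.addStabilizer : Set G) := by
  have hset : (ν.addStabilizer : Set G) =
      ⋂ f : G →ᵇ ℝ, {u | ∫ x, f (u + x) ∂ν = ∫ x, f x ∂ν} := by
    ext u
    simp only [SetLike.mem_coe, mem_addStabilizer, Set.mem_iInter, Set.mem_ofPred_eq]
    have hint (f : G →ᵇ ℝ) : ∫ x, f x ∂ν.map (u + ·) = ∫ x, f (u + x) ∂ν :=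
      integral_map (measurable_const_add u).aemeasurable f.continuous.aestronglyMeasurable
    refine ⟨fun h f => by rw [← hint, h], fun h => ?_⟩
    exact ext_of_forall_integral_eq_of_IsFiniteMeasure fun f => (hint f).trans (h f)
  rw [hset]
  refine isClosed_iInter fun f => isClosed_eq ?_ continuous_const
  exact continuous_of_dominated
    (fun u => (f.continuous.comp (continuous_const_add u)).aestronglyMeasurable)
    (fun u => ae_of_all _ fun x => f.norm_coe_le_norm (u + x)) (integrable_const ‖f‖)
    (ae_of_all _ fun x => f.continuous.comp (continuous_add_const x))

theorem topologicalClosure_zmultiples_le_addStabilizer [IsFiniteMeasure ν]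
    (hg : g ∈ ν.addStabilizer) :
    (AddSubgroup.zmultiples g).topologicalClosure ≤ ν.addStabilizer :=
  AddSubgroup.topologicalClosure_minimal _ (AddSubgroup.zmultiples_le.mpr hg)
    (isClosed_addStabilizer ν)

end Stabilizer

theorem addStabilizer_map_add_left {G : Type*} [AddCommGroup G] [MeasurableSpace G]
    [MeasurableAdd G] (ν : Measure G) (v : G) :
    (ν.map (v + ·)).addStabilizer = ν.addStabilizer := by
  ext g
  have hcomm : (ν.map (v + ·)).map (g + ·) = (ν.map (g + ·)).map (v + ·) := by
    simp only [map_map (measurable_const_add _) (measurable_const_add _), Function.comp_def,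
      add_left_comm g v]
  rw [mem_addStabilizer, mem_addStabilizer, hcomm,
    (measurableEmbedding_addLeft v).map_injective.eq_iff]

section Subgroup

variable {G : Type*} [AddGroup G] [MeasurableSpace G] {H : AddSubgroup G} {ν : Measure G}

theorem map_subtype_val_comap (hH : MeasurableSet (H : Set G)) (hνH : ∀ᵐ x ∂ν, x ∈ H) :
    (ν.comap ((↑) : H → G)).map (↑) = ν := by
  have hval : MeasurableEmbedding ((↑) : H → G) := .subtype_coe hH
  rw [hval.map_comap, Subtype.range_coe]
  exact restrict_eq_self_of_ae_mem hνH

theorem isProbabilityMeasure_comap_subtype_val [IsProbabilityMeasure ν]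
    (hH : MeasurableSet (H : Set G)) (hνH : ∀ᵐ x ∂ν, x ∈ H) :
    IsProbabilityMeasure (ν.comap ((↑) : H → G)) := by
  have : IsProbabilityMeasure ((ν.comap ((↑) : H → G)).map Subtype.val) := by
    rwa [map_subtype_val_comap hH hνH]
  exact isProbabilityMeasure_of_map Subtype.val

theorem measurePreserving_add_left_comap_subtype_val [MeasurableAdd G]
    (hH : MeasurableSet (H : Set G)) (hνH : ∀ᵐ x ∂ν, x ∈ H) (hHν : H ≤ ν.addStabilizer)
    (h₀ : H) : MeasurePreserving (h₀ + ·) (ν.comap ((↑) : H → G)) (ν.comap (↑)) := by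
  have hval : MeasurableEmbedding ((↑) : H → G) := .subtype_coe hH
  have hmeas : Measurable fun h : H => h₀ + h :=
    (measurable_subtype_coe.const_add (h₀ : G)).subtype_mk
  refine ⟨hmeas, hval.map_injective ?_⟩
  calc ((ν.comap (↑)).map (h₀ + ·)).map ((↑) : H → G)
      = ((ν.comap ((↑) : H → G)).map (↑)).map ((h₀ : G) + ·) := by
        rw [map_map measurable_subtype_coe hmeas, map_map (measurable_const_add _)
          measurable_subtype_coe]
        rfl
    _ = (ν.comap ((↑) : H → G)).map (↑) := by
        rw [map_subtype_val_comap hH hνH, mem_addStabilizer.mp (hHν h₀.2)]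

end Subgroup

end MeasureTheory.Measure

theorem ergodic_joining_of_group_rotations_is_Haar_on_coset_general
    {X : Type*} [AddCommGroup X] [TopologicalSpace X] [IsTopologicalAddGroup X]
    [CompactSpace X] [TopologicalSpace.MetrizableSpace X] [MeasurableSpace X] [BorelSpace X]
    {Y : Type*} [AddCommGroup Y] [TopologicalSpace Y] [IsTopologicalAddGroup Y]
    [CompactSpace Y] [TopologicalSpace.MetrizableSpace Y] [MeasurableSpace Y] [BorelSpace Y]
    -- Haar probability measures
    (μX : Measure X) (μY : Measure Y)
    -- ergodic rotations, i.e. dense cyclic subgroups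
    (a : X) (b : Y)
    -- an ergodic joining
    (ν : Measure (X × Y))
    (hν : IsJoiningZ (fun x => a + x) (fun y => b + y) μX μY ν)
    (hνerg : ∀ A : Set (X × Y), MeasurableSet A →
      (Prod.map (fun x => a + x) (fun y => b + y)) ⁻¹' A = A → ν A = 0 ∨ ν A = 1) :
    ∃ (p₀ : X × Y)
      (μH : Measure (AddSubgroup.topologicalClosure (AddSubgroup.zmultiples (a, b)))),
      IsProbabilityMeasure μH ∧
      (∀ h₀ : AddSubgroup.topologicalClosure (AddSubgroup.zmultiples (a, b)),
        MeasurePreserving (fun h => h₀ + h) μH μH) ∧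
      ν = μH.map fun h : AddSubgroup.topologicalClosure (AddSubgroup.zmultiples (a, b)) =>
        p₀ + (h : X × Y) := by
  obtain ⟨hνprob, hνrot, -, -⟩ := hν
  set H := (AddSubgroup.zmultiples (a, b)).topologicalClosure
  have hHclosed : IsClosed (H : Set (X × Y)) := AddSubgroup.isClosed_topologicalClosure _
  have hHmeas : MeasurableSet (H : Set (X × Y)) := hHclosed.measurableSet
  have hHν : H ≤ ν.addStabilizer :=
    Measure.topologicalClosure_zmultiples_le_addStabilizer hνrot.map_eq
  have herg : PreErgodic ((a, b) + ·) ν := .of_measure_eq_zero_or_one hνerg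
  obtain ⟨p₀, hp₀⟩ := herg.exists_ae_neg_add_mem H
    ((AddSubgroup.zmultiples _).le_topologicalClosure (AddSubgroup.mem_zmultiples (a, b)))
  set ν₀ := ν.map (-p₀ + ·)
  have hν₀H : ∀ᵐ x ∂ν₀, x ∈ H := (ae_map_iff (measurable_const_add _).aemeasurable hHmeas).mpr hp₀
  have hHν₀ : H ≤ ν₀.addStabilizer := hHν.trans (Measure.addStabilizer_map_add_left ν (-p₀)).ge
  have : IsProbabilityMeasure ν₀ :=
    Measure.isProbabilityMeasure_map (measurable_const_add _).aemeasurable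
  refine ⟨p₀, ν₀.comap (↑), Measure.isProbabilityMeasure_comap_subtype_val hHmeas hν₀H,
    Measure.measurePreserving_add_left_comap_subtype_val hHmeas hν₀H hHν₀, ?_⟩
  calc ν = ν₀.map (p₀ + ·) := by
        rw [Measure.map_map (measurable_const_add p₀) (measurable_const_add _)]
        simp only [Function.comp_def, add_neg_cancel_left, Measure.map_id']
    _ = ((ν₀.comap (↑)).map ((↑) : H → X × Y)).map (p₀ + ·) := by
        rw [Measure.map_subtype_val_comap hHmeas hν₀H]
    _ = _ := Measure.map_map (measurable_const_add p₀) measurable_subtype_coe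

/-- Every ergodic joining of two ergodic rotations on compact metrizable
abelian groups is the Haar measure of a coset of the closure `H` of `{(na, nb) : n ∈ ℤ}`. -/
theorem ergodic_joining_of_group_rotations_is_Haar_on_coset
    {X : Type*} [AddCommGroup X] [TopologicalSpace X] [IsTopologicalAddGroup X]
    [CompactSpace X] [TopologicalSpace.MetrizableSpace X] [MeasurableSpace X] [BorelSpace X]
    {Y : Type*} [AddCommGroup Y] [TopologicalSpace Y] [IsTopologicalAddGroup Y]
    [CompactSpace Y] [TopologicalSpace.MetrizableSpace Y] [MeasurableSpace Y] [BorelSpace Y]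
    -- Haar probability measures
    (μX : Measure X) (hXprob : IsProbabilityMeasure μX)
    (hXhaar : ∀ c : X, MeasurePreserving (fun x => c + x) μX μX)
    (μY : Measure Y) (hYprob : IsProbabilityMeasure μY)
    (hYhaar : ∀ c : Y, MeasurePreserving (fun y => c + y) μY μY)
    -- ergodic rotations, i.e. dense cyclic subgroups
    (a : X) (b : Y)
    (ha : DenseRange fun n : ℤ => n • a)
    (hb : DenseRange fun n : ℤ => n • b)
    -- an ergodic joining
    (ν : Measure (X × Y))
    (hν : IsJoiningZ (fun x => a + x) (fun y => b + y) μX μY ν)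
    (hνerg : ∀ A : Set (X × Y), MeasurableSet A →
      (Prod.map (fun x => a + x) (fun y => b + y)) ⁻¹' A = A → ν A = 0 ∨ ν A = 1) :
    ∃ (p₀ : X × Y)
      (μH : Measure (AddSubgroup.topologicalClosure (AddSubgroup.zmultiples (a, b)))),
      IsProbabilityMeasure μH ∧
      (∀ h₀ : AddSubgroup.topologicalClosure (AddSubgroup.zmultiples (a, b)),
        MeasurePreserving (fun h => h₀ + h) μH μH) ∧
      ν = μH.map fun h : AddSubgroup.topologicalClosure (AddSubgroup.zmultiples (a, b)) =>
        p₀ + (h : X × Y) :=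
  ergodic_joining_of_group_rotations_is_Haar_on_coset_general μX μY a b ν hν hνerg
end

section
/- Let A = (A, T_A, μ_A), B = (B, T_B, μ_B), C = (C, T_C, μ_C) and D = (D, T_D, μ_D) be G systems. If B is a factor of A via a factor map π_{A,B} : A → B and D is a factor of C via a factor map π_{C,D} : C → D, then the induced map from joinings of A and C to joinings of B and D is surjective: for every joining λ of B and D there exists a joining λ' of A and C whose pushforward under π_{A,B} × π_{C,D} equals λ. -/
open MeasureTheory Filter Topology

section Defs

variable {G : Type*} [Group G] {X Y : Type*} [MeasurableSpace X] [MeasurableSpace Y]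

/-- A joining of two `G` systems: a probability measure on the product which is invariant
under the diagonal action and has the two given measures as marginals. -/
def IsJoining (T : G → X → X) (S : G → Y → Y) (μX : Measure X) (μY : Measure Y)
    (ν : Measure (X × Y)) : Prop :=
  IsProbabilityMeasure ν ∧
    (∀ g : G, MeasurePreserving (fun p : X × Y => (T g p.1, S g p.2)) ν ν) ∧
    ν.map Prod.fst = μX ∧ ν.map Prod.snd = μY

/-- `f ∈ L²(X, μ)` is almost periodic if the orbit `{f ∘ T^g : g ∈ G}` has compact closure
in the norm topology of `L²(X, μ)`. -/
def AlmostPeriodic (T : G → X → X) (μ : Measure X) (f : Lp ℂ 2 μ) : Prop :=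
  IsCompact (closure {h : Lp ℂ 2 μ | ∃ g : G, (h : X → ℂ) =ᵐ[μ] fun x => f (T g x)})

/-- The joining `ν` projects to the product measure on the product of the Kronecker factors:
almost periodic functions of the two systems are uncorrelated under `ν`. -/
def ProjectsToKroneckerProduct (T : G → X → X) (S : G → Y → Y) (μX : Measure X)
    (μY : Measure Y) (ν : Measure (X × Y)) : Prop :=
  ∀ (f : Lp ℂ 2 μX) (h : Lp ℂ 2 μY), AlmostPeriodic T μX f → AlmostPeriodic S μY h →
    ∫ p, f p.1 * h p.2 ∂ν = (∫ x, f x ∂μX) * (∫ y, h y ∂μY)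

/-- Two `G` systems are quasi-disjoint if the only joining projecting to the product measure
on the product of the Kronecker factors is the product measure. -/
def QuasiDisjoint (T : G → X → X) (S : G → Y → Y) (μX : Measure X) (μY : Measure Y) : Prop :=
  ∀ ν : Measure (X × Y), IsJoining T S μX μY ν →
    ProjectsToKroneckerProduct T S μX μY ν → ν = μX.prod μY

/-- Two `G` systems are disjoint if the product measure is their only joining. -/
def DisjointSystems (T : G → X → X) (S : G → Y → Y) (μX : Measure X) (μY : Measure Y) : Prop :=
  ∀ ν : Measure (X × Y), IsJoining T S μX μY ν → ν = μX.prod μY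

/-- Two `G` systems are Kronecker disjoint if every joining projects to the product measure
on the product of the Kronecker factors. -/
def KroneckerDisjoint (T : G → X → X) (S : G → Y → Y) (μX : Measure X) (μY : Measure Y) :
    Prop :=
  ∀ ν : Measure (X × Y), IsJoining T S μX μY ν → ProjectsToKroneckerProduct T S μX μY ν

/-- A separating sieve for the system `(X, T, μ)`. -/
def HasSeparatingSieve (T : G → X → X) (μ : Measure X) : Prop :=
  ∃ A : ℕ → Set X, (∀ n, MeasurableSet (A n)) ∧ (∀ n, 0 < μ (A n)) ∧
    Tendsto (fun n => μ (A n)) atTop (𝓝 0) ∧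
    ∃ X' : Set X, μ X'ᶜ = 0 ∧
      ∀ x ∈ X', ∀ x' ∈ X', (∀ n : ℕ, ∃ g : G, T g x ∈ A n ∧ T g x' ∈ A n) → x = x'

/-- A factor map of `G` systems: a measurable, almost everywhere `G`-equivariant map
pushing `μX` forward to `μY`. -/
def IsFactorMap (T : G → X → X) (S : G → Y → Y) (μX : Measure X) (μY : Measure Y)
    (π : X → Y) : Prop :=
  Measurable π ∧ μX.map π = μY ∧ ∀ g : G, ∀ᵐ x ∂μX, π (T g x) = S g (π x)

/-- Ergodicity of a `G` system: every invariant Borel set is null or conull. -/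
def ErgodicSystem (T : G → X → X) (μ : Measure X) : Prop :=
  ∀ A : Set X, MeasurableSet A → (∀ g : G, T g ⁻¹' A = A) → μ A = 0 ∨ μ A = 1

end Defs

/-! Disintegrate each system over its factor: `κ = condDistrib id π μA` is a Markov kernel with
`κ ∘ₘ μB = μA` whose measure `κ b` lives on the fibre `π⁻¹' {b}`. Because the action on `B` is by
bijections, `κ` is equivariant: `T_A^g` pushes `κ b` to `κ (T_B^g b)` for almost every `b`. The
relatively independent lift `∫ κ_A b ⊗ κ_C d dλ(b, d)` of a joining `λ` of `B` and `D` is then a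
joining of `A` and `C`, and it projects back onto `λ` because the kernels live on fibres. -/

open ProbabilityTheory

namespace MeasureTheory.Measure

variable {α β γ δ α' γ' : Type*} {mα : MeasurableSpace α} {mβ : MeasurableSpace β}
  {mγ : MeasurableSpace γ} {mδ : MeasurableSpace δ} {mα' : MeasurableSpace α'}
  {mγ' : MeasurableSpace γ'}

lemma comp_map (μ : Measure α) {f : α → β} (hf : Measurable f) (κ : Kernel β γ) :
    κ ∘ₘ μ.map f = κ.comap f hf ∘ₘ μ := by
  rw [← deterministic_comp_eq_map hf, comp_assoc, Kernel.comp_deterministic_eq_comap]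

lemma map_prodMap_compProd_measurableEquiv (μ : Measure α) [SFinite μ] (κ : Kernel α β)
    [IsSFiniteKernel κ] (e : α ≃ᵐ α') :
    (μ ⊗ₘ κ).map (Prod.map e id) = μ.map e ⊗ₘ κ.comap e.symm e.symm.measurable := by
  ext s hs
  rw [map_apply (e.measurable.prodMap measurable_id) hs,
    compProd_apply ((e.measurable.prodMap measurable_id) hs), compProd_apply hs,
    lintegral_map_equiv _ e]
  simp_rw [Kernel.comap_apply, e.symm_apply_apply]
  rfl

section ParallelComp

variable (ν : Measure (α × γ)) {κ : Kernel α β} {η : Kernel γ δ}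

lemma map_prodMap_parallelComp_comp [IsSFiniteKernel κ] [IsSFiniteKernel η]
    {f : β → α'} {g : δ → γ'} (hf : Measurable f) (hg : Measurable g) :
    ((κ ∥ₖ η) ∘ₘ ν).map (Prod.map f g) = (κ.map f ∥ₖ η.map g) ∘ₘ ν := by
  rw [map_comp _ _ (hf.prodMap hg)]
  congr 1
  ext1 p
  rw [Kernel.map_apply _ (hf.prodMap hg), Kernel.parallelComp_apply, Kernel.parallelComp_apply,
    Kernel.map_apply _ hf, Kernel.map_apply _ hg, map_prod_map _ _ hf hg]

lemma map_fst_parallelComp_comp [IsSFiniteKernel κ] [IsMarkovKernel η] :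
    ((κ ∥ₖ η) ∘ₘ ν).map Prod.fst = κ ∘ₘ ν.map Prod.fst := by
  rw [map_comp _ _ measurable_fst, comp_map _ measurable_fst]
  congr 1
  ext1 p
  simp [Kernel.map_apply _ measurable_fst, Kernel.parallelComp_apply, map_fst_prod]

lemma map_snd_parallelComp_comp [IsMarkovKernel κ] [IsSFiniteKernel η] :
    ((κ ∥ₖ η) ∘ₘ ν).map Prod.snd = η ∘ₘ ν.map Prod.snd := by
  rw [map_comp _ _ measurable_snd, comp_map _ measurable_snd]
  congr 1
  ext1 p
  simp [Kernel.map_apply _ measurable_snd, Kernel.parallelComp_apply, map_snd_prod]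

lemma map_prodMap_parallelComp_comp_eq_self [IsSFiniteKernel κ] [IsSFiniteKernel η]
    {f : β → α} {g : δ → γ} (hf : Measurable f) (hg : Measurable g)
    (hκ : ∀ᵐ a ∂ν.map Prod.fst, (κ a).map f = dirac a)
    (hη : ∀ᵐ c ∂ν.map Prod.snd, (η c).map g = dirac c) :
    ((κ ∥ₖ η) ∘ₘ ν).map (Prod.map f g) = ν := by
  rw [map_prodMap_parallelComp_comp _ hf hg]
  refine (comp_congr (η := Kernel.id) ?_).trans id_comp
  filter_upwards [ae_of_ae_map measurable_fst.aemeasurable hκ,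
    ae_of_ae_map measurable_snd.aemeasurable hη] with p hfst hsnd
  rw [Kernel.parallelComp_apply, Kernel.map_apply _ hf, Kernel.map_apply _ hg, hfst, hsnd,
    dirac_prod_dirac, Kernel.id_apply]

end ParallelComp

end MeasureTheory.Measure

namespace ProbabilityTheory

variable {α β β' Ω : Type*} {mα : MeasurableSpace α} {mβ : MeasurableSpace β}
  {mβ' : MeasurableSpace β'} [MeasurableSpace Ω] [StandardBorelSpace Ω] [Nonempty Ω]
  {μ : Measure α} [IsFiniteMeasure μ] {X : α → β} {Y : α → Ω}

lemma ae_condDistrib_measurableEquiv_comp (e : β ≃ᵐ β') (hX : AEMeasurable X μ)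
    (hY : AEMeasurable Y μ) :
    ∀ᵐ b ∂μ.map X, condDistrib Y (e ∘ X) μ (e b) = condDistrib Y X μ b := by
  have h : condDistrib Y (e ∘ X) μ =ᵐ[μ.map (e ∘ X)]
      (condDistrib Y X μ).comap e.symm e.symm.measurable := by
    refine condDistrib_ae_eq_of_measure_eq_compProd _ hY ?_
    rw [← AEMeasurable.map_map_of_aemeasurable e.measurable.aemeasurable hX,
      ← Measure.map_prodMap_compProd_measurableEquiv, compProd_map_condDistrib hY,
      AEMeasurable.map_map_of_aemeasurable (e.measurable.prodMap measurable_id).aemeasurable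
        (hX.prodMk hY)]
    rfl
  rw [← AEMeasurable.map_map_of_aemeasurable e.measurable.aemeasurable hX] at h
  filter_upwards [ae_of_ae_map e.measurable.aemeasurable h] with b hb
  rw [hb, Kernel.comap_apply, e.symm_apply_apply]

lemma ae_map_condDistrib_id_eq_dirac [StandardBorelSpace β] [Nonempty β] {ρ : Measure Ω}
    [IsFiniteMeasure ρ] {π : Ω → β} (hπ : Measurable π) :
    ∀ᵐ b ∂ρ.map π, (condDistrib id π ρ b).map π = Measure.dirac b := by
  filter_upwards [condDistrib_comp π aemeasurable_id hπ, condDistrib_comp_self π measurable_id]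
    with b hcomp hself
  rw [← Kernel.map_apply _ hπ, ← hcomp]
  exact hself

end ProbabilityTheory

section Systems

variable {G X Y : Type*} [MeasurableSpace X] [MeasurableSpace Y]

def MeasurableEquiv.ofAction [Group G] (T : G → X → X) (h1 : ∀ x, T 1 x = x)
    (hmul : ∀ g h x, T (g * h) x = T g (T h x)) (hT : ∀ g, Measurable (T g)) (g : G) :
    X ≃ᵐ X where
  toFun := T g
  invFun := T g⁻¹
  left_inv x := by rw [← hmul, inv_mul_cancel, h1]
  right_inv x := by rw [← hmul, mul_inv_cancel, h1]
  measurable_toFun := hT g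
  measurable_invFun := hT g⁻¹

variable [StandardBorelSpace X] [Nonempty X] {T : G → X → X} {S : G → Y → Y}
  {μX : Measure X} [IsFiniteMeasure μX] {μY : Measure Y} {π : X → Y}

lemma IsFactorMap.condDistrib_id_comp (hπ : IsFactorMap T S μX μY π) :
    condDistrib id π μX ∘ₘ μY = μX := by
  rw [← hπ.2.1, condDistrib_comp_map hπ.1.aemeasurable aemeasurable_id, Measure.map_id]

lemma IsFactorMap.ae_map_condDistrib_id_eq [Group G] (hπ : IsFactorMap T S μX μY π)
    (hT : ∀ g, MeasurePreserving (T g) μX μX) (hS : ∀ g, MeasurePreserving (S g) μY μY)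
    (hS1 : ∀ y, S 1 y = y) (hSmul : ∀ g h y, S (g * h) y = S g (S h y)) (g : G) :
    ∀ᵐ y ∂μY, (condDistrib id π μX y).map (T g) = condDistrib id π μX (S g y) := by
  obtain ⟨hπm, hπμ, hπT⟩ := hπ
  set e := MeasurableEquiv.ofAction S hS1 hSmul (fun g => (hS g).measurable) g
  -- `T g` preserves `μX`, so conditioning `id` on `π` is conditioning `T g` on `π ∘ T g = e ∘ π`.
  have hshift : condDistrib id π μX =ᵐ[μY] condDistrib (T g) (e ∘ π) μX := by
    have h := condDistrib_map (ν := μX) (f := T g) (X := π) (Y := id) hπm.aemeasurable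
      aemeasurable_id (hT g).measurable.aemeasurable
    have hmap : μX.map (π ∘ T g) = μY := by
      rw [← Measure.map_map hπm (hT g).measurable, (hT g).map_eq, hπμ]
    simp only [(hT g).map_eq] at h
    rwa [hmap, Function.id_comp,
      condDistrib_congr_right (X := π ∘ T g) (X' := e ∘ π) (hπT g)] at h
  have hrelabel := ae_condDistrib_measurableEquiv_comp e hπm.aemeasurable
    (hT g).measurable.aemeasurable (μ := μX)
  have hpush : condDistrib (T g ∘ id) π μX =ᵐ[μX.map π] (condDistrib id π μX).map (T g) :=
    condDistrib_comp π aemeasurable_id (hT g).measurable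
  rw [hπμ] at hrelabel hpush
  filter_upwards [(hS g).quasiMeasurePreserving.ae hshift, hrelabel, hpush] with y hs hr hp
  rw [hs, ← Kernel.map_apply _ (hT g).measurable, ← hp]
  exact hr.symm

end Systems

lemma IsJoining.parallelComp_comp {G A B C D : Type*} [MeasurableSpace A] [MeasurableSpace B]
    [MeasurableSpace C] [MeasurableSpace D] {TA : G → A → A} {TB : G → B → B}
    {TC : G → C → C} {TD : G → D → D} {μA : Measure A} {μB : Measure B} {μC : Measure C}
    {μD : Measure D} {ν : Measure (B × D)} {κ : Kernel B A} {η : Kernel D C} [IsMarkovKernel κ]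
    [IsMarkovKernel η] (hν : IsJoining TB TD μB μD ν) (hκ : κ ∘ₘ μB = μA)
    (hη : η ∘ₘ μD = μC) (hTA : ∀ g, Measurable (TA g)) (hTC : ∀ g, Measurable (TC g))
    (hκT : ∀ g, ∀ᵐ b ∂μB, (κ b).map (TA g) = κ (TB g b))
    (hηT : ∀ g, ∀ᵐ d ∂μD, (η d).map (TC g) = η (TD g d)) :
    IsJoining TA TC μA μC ((κ ∥ₖ η) ∘ₘ ν) := by
  obtain ⟨hprob, hinv, hfst, hsnd⟩ := hν
  refine ⟨inferInstance, fun g => ⟨(hTA g).prodMap (hTC g), ?_⟩, ?_, ?_⟩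
  · have hΨ := (hinv g).measurable
    rw [← hfst] at hκT
    rw [← hsnd] at hηT
    calc ((κ ∥ₖ η) ∘ₘ ν).map (Prod.map (TA g) (TC g))
        = (κ.map (TA g) ∥ₖ η.map (TC g)) ∘ₘ ν :=
          Measure.map_prodMap_parallelComp_comp _ (hTA g) (hTC g)
      _ = (κ ∥ₖ η).comap _ hΨ ∘ₘ ν := by
          refine Measure.comp_congr ?_
          filter_upwards [ae_of_ae_map measurable_fst.aemeasurable (hκT g),
            ae_of_ae_map measurable_snd.aemeasurable (hηT g)] with p hp1 hp2
          rw [Kernel.comap_apply, Kernel.parallelComp_apply, Kernel.parallelComp_apply,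
            Kernel.map_apply _ (hTA g), Kernel.map_apply _ (hTC g), hp1, hp2]
      _ = (κ ∥ₖ η) ∘ₘ ν := by rw [← Measure.comp_map, (hinv g).map_eq]
  · rw [Measure.map_fst_parallelComp_comp, hfst, hκ]
  · rw [Measure.map_snd_parallelComp_comp, hsnd, hη]

theorem joinings_lift_through_factors_general
    {G : Type*} [Group G]
    {A : Type*} [MetricSpace A] [CompactSpace A] [MeasurableSpace A] [BorelSpace A]
    {B : Type*} [MetricSpace B] [CompactSpace B] [MeasurableSpace B] [BorelSpace B]
    {C : Type*} [MetricSpace C] [CompactSpace C] [MeasurableSpace C] [BorelSpace C]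
    {D : Type*} [MetricSpace D] [CompactSpace D] [MeasurableSpace D] [BorelSpace D]
    (TA : G → A → A)
    (μA : Measure A) (hAprob : IsProbabilityMeasure μA)
    (hTAμ : ∀ g, MeasurePreserving (TA g) μA μA)
    (TB : G → B → B) (hTB1 : ∀ x, TB 1 x = x)
    (hTBmul : ∀ g h x, TB (g * h) x = TB g (TB h x))
    (μB : Measure B) (hBprob : IsProbabilityMeasure μB)
    (hTBμ : ∀ g, MeasurePreserving (TB g) μB μB)
    (TC : G → C → C)
    (μC : Measure C) (hCprob : IsProbabilityMeasure μC)
    (hTCμ : ∀ g, MeasurePreserving (TC g) μC μC)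
    (TD : G → D → D) (hTD1 : ∀ x, TD 1 x = x)
    (hTDmul : ∀ g h x, TD (g * h) x = TD g (TD h x))
    (μD : Measure D) (hDprob : IsProbabilityMeasure μD)
    (hTDμ : ∀ g, MeasurePreserving (TD g) μD μD)
    (πAB : A → B) (hπAB : IsFactorMap TA TB μA μB πAB)
    (πCD : C → D) (hπCD : IsFactorMap TC TD μC μD πCD) :
    ∀ ν : Measure (B × D), IsJoining TB TD μB μD ν →
      ∃ ν' : Measure (A × C), IsJoining TA TC μA μC ν' ∧
        ν'.map (Prod.map πAB πCD) = ν := by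
  intro ν hν
  have := nonempty_of_isProbabilityMeasure μA
  have := nonempty_of_isProbabilityMeasure μB
  have := nonempty_of_isProbabilityMeasure μC
  have := nonempty_of_isProbabilityMeasure μD
  refine ⟨_, hν.parallelComp_comp hπAB.condDistrib_id_comp hπCD.condDistrib_id_comp
    (fun g => (hTAμ g).measurable) (fun g => (hTCμ g).measurable)
    (hπAB.ae_map_condDistrib_id_eq hTAμ hTBμ hTB1 hTBmul)
    (hπCD.ae_map_condDistrib_id_eq hTCμ hTDμ hTD1 hTDmul), ?_⟩
  refine Measure.map_prodMap_parallelComp_comp_eq_self ν hπAB.1 hπCD.1 ?_ ?_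
  · rw [hν.2.2.1, ← hπAB.2.1]
    exact ae_map_condDistrib_id_eq_dirac hπAB.1
  · rw [hν.2.2.2, ← hπCD.2.1]
    exact ae_map_condDistrib_id_eq_dirac hπCD.1

/-- Joinings lift through factor maps: if `B` is a factor of `A` and `D` is a
factor of `C`, then every joining of `B` and `D` is the pushforward of some joining of `A` and
`C` under the product of the factor maps. -/
theorem joinings_lift_through_factors
    {G : Type*} [Group G] [Countable G]
    {A : Type*} [MetricSpace A] [CompactSpace A] [MeasurableSpace A] [BorelSpace A]
    {B : Type*} [MetricSpace B] [CompactSpace B] [MeasurableSpace B] [BorelSpace B]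
    {C : Type*} [MetricSpace C] [CompactSpace C] [MeasurableSpace C] [BorelSpace C]
    {D : Type*} [MetricSpace D] [CompactSpace D] [MeasurableSpace D] [BorelSpace D]
    (TA : G → A → A) (hTA1 : ∀ x, TA 1 x = x)
    (hTAmul : ∀ g h x, TA (g * h) x = TA g (TA h x))
    (hTAcont : ∀ g, Continuous (TA g))
    (μA : Measure A) (hAprob : IsProbabilityMeasure μA)
    (hTAμ : ∀ g, MeasurePreserving (TA g) μA μA)
    (TB : G → B → B) (hTB1 : ∀ x, TB 1 x = x)
    (hTBmul : ∀ g h x, TB (g * h) x = TB g (TB h x))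
    (hTBcont : ∀ g, Continuous (TB g))
    (μB : Measure B) (hBprob : IsProbabilityMeasure μB)
    (hTBμ : ∀ g, MeasurePreserving (TB g) μB μB)
    (TC : G → C → C) (hTC1 : ∀ x, TC 1 x = x)
    (hTCmul : ∀ g h x, TC (g * h) x = TC g (TC h x))
    (hTCcont : ∀ g, Continuous (TC g))
    (μC : Measure C) (hCprob : IsProbabilityMeasure μC)
    (hTCμ : ∀ g, MeasurePreserving (TC g) μC μC)
    (TD : G → D → D) (hTD1 : ∀ x, TD 1 x = x)
    (hTDmul : ∀ g h x, TD (g * h) x = TD g (TD h x))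
    (hTDcont : ∀ g, Continuous (TD g))
    (μD : Measure D) (hDprob : IsProbabilityMeasure μD)
    (hTDμ : ∀ g, MeasurePreserving (TD g) μD μD)
    (πAB : A → B) (hπAB : IsFactorMap TA TB μA μB πAB)
    (πCD : C → D) (hπCD : IsFactorMap TC TD μC μD πCD) :
    ∀ ν : Measure (B × D), IsJoining TB TD μB μD ν →
      ∃ ν' : Measure (A × C), IsJoining TA TC μA μC ν' ∧
        ν'.map (Prod.map πAB πCD) = ν :=
  joinings_lift_through_factors_general TA μA hAprob hTAμ TB hTB1 hTBmul μB hBprob hTBμ TC μC hCprob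
    hTCμ TD hTD1 hTDmul μD hDprob hTDμ πAB hπAB πCD hπCD
end
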